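/- arXiv:2510.22044 — 3 statements merged into one kernel-verified Lean document; each statement's English description precedes it below -/
import Mathlib

section
/- Let A be an m×d real matrix (m ≤ d) such that the Gram matrix G := A Aᵀ is invertible, and set Π := I_d − Aᵀ G⁻¹ A. Then Q := √2·Π is the unique solution of the constrained least-squares problem min ‖√2·I_d − Q̄‖_F over all d×d real matrices Q̄ satisfying Q̄ Aᵀ = 0; that is, Q Aᵀ = 0, for every d×d matrix Q̄ with Q̄ Aᵀ = 0 one has ‖√2·I_d − Q‖_F ≤ ‖√2·I_d − Q̄‖_F, and equality holds only if Q̄ = Q. -/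
/-!
Write `P := Aᵀ (A Aᵀ)⁻¹ A`, so that `√2 I - √2 Π = √2 P`. For any `Q'` with `Q' Aᵀ = 0`, the
difference `R := √2 Π - Q'` also satisfies `R Aᵀ = 0`, hence `R P = 0`; since `P` is symmetric,
`R` is Frobenius-orthogonal to `√2 P`. Pythagoras then gives
`‖√2 I - Q'‖_F² = ‖√2 P‖_F² + ‖R‖_F²`, which is minimal exactly when `R = 0`.
-/

open Matrix

/-- Frobenius norm of a square real matrix. -/
noncomputable def frobNorm {d : ℕ} (M : Matrix (Fin d) (Fin d) ℝ) : ℝ :=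
  Real.sqrt (∑ i, ∑ j, (M i j) ^ 2)

section Projection

variable {R : Type*} [CommRing R] {m n : Type*} [Fintype m] [DecidableEq m] [Fintype n]

theorem isSymm_transpose_mul_inv_mul (A : Matrix m n R) :
    (Aᵀ * (A * Aᵀ)⁻¹ * A).IsSymm := by
  rw [IsSymm, transpose_mul, transpose_mul, transpose_nonsing_inv, transpose_mul,
    transpose_transpose, Matrix.mul_assoc]

theorem transpose_mul_inv_mul_mul_transpose {A : Matrix m n R} (hG : IsUnit (A * Aᵀ)) :
    Aᵀ * (A * Aᵀ)⁻¹ * A * Aᵀ = Aᵀ := by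
  rw [Matrix.mul_assoc, nonsing_inv_mul_cancel_right _ _ ((isUnit_iff_isUnit_det _).mp hG)]

theorem mul_transpose_mul_inv_mul_eq_zero {k : Type*} {A : Matrix m n R} {B : Matrix k n R}
    (hB : B * Aᵀ = 0) : B * (Aᵀ * (A * Aᵀ)⁻¹ * A) = 0 := by
  rw [← Matrix.mul_assoc, ← Matrix.mul_assoc, hB, Matrix.zero_mul, Matrix.zero_mul]

end Projection

section Pythagoras

variable {R : Type*} [CommRing R] {m n : Type*} [Fintype m] [Fintype n]

theorem trace_add_mul_transpose_add_of_mul_transpose_eq_zero {X Y : Matrix m n R}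
    (h : Y * Xᵀ = 0) :
    trace ((X + Y) * (X + Y)ᵀ) = trace (X * Xᵀ) + trace (Y * Yᵀ) := by
  have h' : X * Yᵀ = 0 := by rw [← transpose_transpose (X * Yᵀ), transpose_mul,
    transpose_transpose, h, transpose_zero]
  rw [transpose_add, Matrix.add_mul, Matrix.mul_add, Matrix.mul_add, h, h', trace_add,
    trace_add]
  simp

end Pythagoras

theorem trace_mul_transpose_self_nonneg {m n : Type*} [Fintype m] [Fintype n]
    (M : Matrix m n ℝ) : 0 ≤ trace (M * Mᵀ) := by
  simpa [conjTranspose_eq_transpose_of_trivial] using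
    (posSemidef_self_mul_conjTranspose M).trace_nonneg

section Frobenius

variable {d : ℕ}

theorem frobNorm_eq_sqrt_trace (M : Matrix (Fin d) (Fin d) ℝ) :
    frobNorm M = √(trace (M * Mᵀ)) := by
  simp [frobNorm, trace, mul_apply, sq]

theorem frobNorm_le_frobNorm_add {X Y : Matrix (Fin d) (Fin d) ℝ} (h : Y * Xᵀ = 0) :
    frobNorm X ≤ frobNorm (X + Y) := by
  rw [frobNorm_eq_sqrt_trace, frobNorm_eq_sqrt_trace,
    trace_add_mul_transpose_add_of_mul_transpose_eq_zero h]
  exact Real.sqrt_le_sqrt (le_add_of_nonneg_right (trace_mul_transpose_self_nonneg Y))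

theorem eq_zero_of_frobNorm_eq_frobNorm_add {X Y : Matrix (Fin d) (Fin d) ℝ}
    (h : Y * Xᵀ = 0) (heq : frobNorm X = frobNorm (X + Y)) : Y = 0 := by
  rw [frobNorm_eq_sqrt_trace, frobNorm_eq_sqrt_trace,
    trace_add_mul_transpose_add_of_mul_transpose_eq_zero h,
    Real.sqrt_inj (trace_mul_transpose_self_nonneg X)
      (add_nonneg (trace_mul_transpose_self_nonneg X) (trace_mul_transpose_self_nonneg Y))]
    at heq
  have hY : trace (Y * Yᴴ) = 0 := by
    rw [conjTranspose_eq_transpose_of_trivial]; linarith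
  exact trace_mul_conjTranspose_self_eq_zero_iff.mp hY

end Frobenius

theorem olla_diffusion_least_squares_general
    {m d : ℕ} (A : Matrix (Fin m) (Fin d) ℝ)
    (hG : IsUnit (A * Aᵀ)) :
    (Real.sqrt 2 • ((1 : Matrix (Fin d) (Fin d) ℝ) - Aᵀ * (A * Aᵀ)⁻¹ * A)) * Aᵀ = 0 ∧
    ∀ Q' : Matrix (Fin d) (Fin d) ℝ, Q' * Aᵀ = 0 →
      frobNorm (Real.sqrt 2 • (1 : Matrix (Fin d) (Fin d) ℝ) -
          Real.sqrt 2 • ((1 : Matrix (Fin d) (Fin d) ℝ) - Aᵀ * (A * Aᵀ)⁻¹ * A)) ≤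
        frobNorm (Real.sqrt 2 • (1 : Matrix (Fin d) (Fin d) ℝ) - Q') ∧
      (frobNorm (Real.sqrt 2 • (1 : Matrix (Fin d) (Fin d) ℝ) -
          Real.sqrt 2 • ((1 : Matrix (Fin d) (Fin d) ℝ) - Aᵀ * (A * Aᵀ)⁻¹ * A)) =
        frobNorm (Real.sqrt 2 • (1 : Matrix (Fin d) (Fin d) ℝ) - Q') →
        Q' = Real.sqrt 2 • ((1 : Matrix (Fin d) (Fin d) ℝ) - Aᵀ * (A * Aᵀ)⁻¹ * A)) := by
  set P := Aᵀ * (A * Aᵀ)⁻¹ * A with hP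
  set Q := Real.sqrt 2 • ((1 : Matrix (Fin d) (Fin d) ℝ) - P) with hQ
  have hQA : Q * Aᵀ = 0 := by
    rw [smul_mul, Matrix.sub_mul, Matrix.one_mul, transpose_mul_inv_mul_mul_transpose hG,
      sub_self, smul_zero]
  refine ⟨hQA, fun Q' hQ'A => ?_⟩
  have hdiff : Real.sqrt 2 • (1 : Matrix (Fin d) (Fin d) ℝ) - Q = Real.sqrt 2 • P := by
    rw [hQ, smul_sub, sub_sub_cancel]
  have hdecomp : Real.sqrt 2 • (1 : Matrix (Fin d) (Fin d) ℝ) - Q' =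
      Real.sqrt 2 • P + (Q - Q') := by
    rw [← hdiff, sub_add_sub_cancel]
  have horth : (Q - Q') * (Real.sqrt 2 • P)ᵀ = 0 := by
    rw [transpose_smul, hP, (isSymm_transpose_mul_inv_mul A).eq, Matrix.mul_smul,
      mul_transpose_mul_inv_mul_eq_zero (by rw [Matrix.sub_mul, hQA, hQ'A, sub_self]),
      smul_zero]
  rw [hdiff, hdecomp]
  exact ⟨frobNorm_le_frobNorm_add horth,
    fun heq => (sub_eq_zero.mp (eq_zero_of_frobNorm_eq_frobNorm_add horth heq)).symm⟩

/-- The diffusion part of Proposition 4.1: `Q = √2 Π` is the unique minimizer of the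
Frobenius distance to `√2 I` among matrices annihilating `Aᵀ`. -/
theorem olla_diffusion_least_squares
    {m d : ℕ} (hmd : m ≤ d) (A : Matrix (Fin m) (Fin d) ℝ)
    (hG : IsUnit (A * Aᵀ)) :
    (Real.sqrt 2 • ((1 : Matrix (Fin d) (Fin d) ℝ) - Aᵀ * (A * Aᵀ)⁻¹ * A)) * Aᵀ = 0 ∧
    ∀ Q' : Matrix (Fin d) (Fin d) ℝ, Q' * Aᵀ = 0 →
      frobNorm (Real.sqrt 2 • (1 : Matrix (Fin d) (Fin d) ℝ) -
          Real.sqrt 2 • ((1 : Matrix (Fin d) (Fin d) ℝ) - Aᵀ * (A * Aᵀ)⁻¹ * A)) ≤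
        frobNorm (Real.sqrt 2 • (1 : Matrix (Fin d) (Fin d) ℝ) - Q') ∧
      (frobNorm (Real.sqrt 2 • (1 : Matrix (Fin d) (Fin d) ℝ) -
          Real.sqrt 2 • ((1 : Matrix (Fin d) (Fin d) ℝ) - Aᵀ * (A * Aᵀ)⁻¹ * A)) =
        frobNorm (Real.sqrt 2 • (1 : Matrix (Fin d) (Fin d) ℝ) - Q') →
        Q' = Real.sqrt 2 • ((1 : Matrix (Fin d) (Fin d) ℝ) - Aᵀ * (A * Aᵀ)⁻¹ * A)) :=
  olla_diffusion_least_squares_general A hG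
end

section
/- (Recovery map via the implicit function theorem) Let h : ℝ^d → ℝ^m be twice continuously differentiable, let Σ := h⁻¹({0}) be nonempty and compact, and assume the Jacobian Dh(y) has full row rank for every y ∈ Σ. Then there exist δ > 0 and r > 0 such that for every y ∈ Σ and every p ∈ ℝ^m with ‖p‖₂ < δ there is a unique L ∈ ℝ^m with ‖L‖₂ < r satisfying h(y + Dh(y)ᵀ L) = p; moreover, for p = 0 this unique L equals 0. -/
/-!
For `y ∈ Σ` the map `φ_y(L) = h(y + Dh(y)ᵀ L)` has derivative `B_y = Dh(y) Dh(y)ᵀ` at `L = 0`,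
which is invertible because `Dh(y)` is onto. Compactness of `Σ` gives uniform bounds
`‖B_y⁻¹‖ ≤ C` and `‖Dh(y)‖ ≤ M`, and a radius `ρ` such that `Dh` stays `1 / (2CM)`-close to
`Dh(y)` on the `ρ`-ball around every `y ∈ Σ`. By the mean value inequality, `φ_y` is then
approximated by `B_y` up to `1 / (2C)` on the ball of radius `r = ρ / (2M)`, so the quantitative
inverse function theorem makes `φ_y` injective there and onto the ball of radius `r / (4C)`
around `φ_y(0) = 0`, uniformly in `y`.
-/

open Metric Set ContinuousLinearMap
open scoped NNReal InnerProduct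

theorem ContinuousLinearMap.isUnit_comp_adjoint_of_surjective
    {𝕜 E F : Type*} [RCLike 𝕜] [NormedAddCommGroup E] [InnerProductSpace 𝕜 E] [CompleteSpace E]
    [NormedAddCommGroup F] [InnerProductSpace 𝕜 F] [CompleteSpace F] [FiniteDimensional 𝕜 F]
    {T : E →L[𝕜] F} (hT : Function.Surjective T) : IsUnit (T ∘L T†) := by
  refine isUnit_iff_isUnit_toLinearMap.2 ((LinearMap.isUnit_iff_ker_eq_bot _).2 ?_)
  rw [ker_self_comp_adjoint, ← orthogonal_range, LinearMap.range_eq_top.2 hT,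
    Submodule.top_orthogonal_eq_bot]

theorem ContinuousOn.ringInverse {X R : Type*} [TopologicalSpace X] [NormedRing R]
    [HasSummableGeomSeries R] {K : Set X} {B : X → R} (hB : ContinuousOn B K)
    (hunit : ∀ y ∈ K, IsUnit (B y)) : ContinuousOn (fun y => Ring.inverse (B y)) K := fun y hy => by
  obtain ⟨u, hu⟩ := hunit y hy
  exact (hu ▸ NormedRing.inverse_continuousAt u).comp_continuousWithinAt (hB y hy)

theorem IsCompact.exists_pos_bound_of_continuousOn {X E : Type*} [TopologicalSpace X]
    [SeminormedAddGroup E] {K : Set X} (hK : IsCompact K) {f : X → E} (hf : ContinuousOn f K) :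
    ∃ C > 0, ∀ x ∈ K, ‖f x‖ ≤ C := by
  obtain ⟨C, hC⟩ := hK.exists_bound_of_continuousOn hf
  exact ⟨max C 1, by positivity, fun x hx => (hC x hx).trans (le_max_left _ _)⟩

theorem IsCompact.exists_pos_forall_dist_lt_of_continuousAt {α β : Type*} [PseudoMetricSpace α]
    [PseudoMetricSpace β] {K : Set α} (hK : IsCompact K) {f : α → β}
    (hf : ∀ x ∈ K, ContinuousAt f x) {ε : ℝ} (hε : 0 < ε) :
    ∃ ρ > 0, ∀ x ∈ K, ∀ z ∈ ball x ρ, dist (f z) (f x) < ε := by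
  obtain ⟨ρ, hρ, hρf⟩ := Metric.mem_uniformity_dist.1
    (hK.uniformContinuousAt_of_continuousAt f hf (Metric.dist_mem_uniformity hε))
  exact ⟨ρ, hρ, fun x hx z hz => dist_comm (f x) (f z) ▸ hρf (mem_ball'.1 hz) hx⟩

theorem approximatesLinearOn_comp_const_add {E F G : Type*} [NormedAddCommGroup E]
    [NormedSpace ℝ E] [NormedAddCommGroup F] [NormedSpace ℝ F] [NormedAddCommGroup G]
    [NormedSpace ℝ G] {g : E → F} {y : E} {A : G →L[ℝ] E} {r ρ : ℝ} {c : ℝ≥0}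
    (hAr : ‖A‖ * r < ρ) (hg : ∀ z ∈ ball y ρ, DifferentiableAt ℝ g z)
    (hc : ∀ z ∈ ball y ρ, ‖fderiv ℝ g z - fderiv ℝ g y‖ * ‖A‖ ≤ c) :
    ApproximatesLinearOn (fun L => g (y + A L)) (fderiv ℝ g y ∘L A) (closedBall 0 r) c := by
  have hmem : ∀ L ∈ closedBall 0 r, y + A L ∈ ball y ρ := fun L hL => by
    rw [mem_ball, dist_self_add_left]
    calc ‖A L‖ ≤ ‖A‖ * ‖L‖ := A.le_opNorm L
      _ ≤ ‖A‖ * r := by gcongr; simpa using hL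
      _ < ρ := hAr
  intro L₁ h₁ L₂ h₂
  exact (convex_closedBall 0 r).norm_image_sub_le_of_norm_hasFDerivWithin_le'
    (fun L hL => ((hg _ (hmem L hL)).hasFDerivAt.comp L
      (A.hasFDerivAt.const_add y)).hasFDerivWithinAt)
    (fun L hL => by rw [← sub_comp]; exact (opNorm_comp_le _ _).trans (hc _ (hmem L hL))) h₂ h₁

section

variable {𝕜 E F : Type*} [NontriviallyNormedField 𝕜] [NormedAddCommGroup E] [NormedSpace 𝕜 E]
  [NormedAddCommGroup F] [NormedSpace 𝕜 F]

def ContinuousLinearEquiv.nonlinearRightInverseOfNormSymmLE (f' : E ≃L[𝕜] F) {C : ℝ}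
    (hC : ‖(f'.symm : F →L[𝕜] E)‖ ≤ C) : (f' : E →L[𝕜] F).NonlinearRightInverse where
  toFun := f'.symm
  nnnorm := C.toNNReal
  bound' y := ((f'.symm : F →L[𝕜] E).le_opNorm y).trans <| by
    rw [Real.coe_toNNReal _ ((norm_nonneg _).trans hC)]; gcongr
  right_inv' := f'.apply_symm_apply

theorem ApproximatesLinearOn.existsUnique_dist_lt [CompleteSpace E] {f : E → F}
    {f' : E ≃L[𝕜] F} {x : E} {r C : ℝ} {c : ℝ≥0} (hr : 0 < r) (hC0 : 0 < C)
    (hC : ‖(f'.symm : F →L[𝕜] E)‖ ≤ C) (hc : 2 * c * C ≤ 1)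
    (hf : ApproximatesLinearOn f (f' : E →L[𝕜] F) (closedBall x r) c)
    {p : F} (hp : dist p (f x) < r / (4 * C)) : ∃! z, dist z x < r ∧ f z = p := by
  have hcC : c < C⁻¹ := by
    rw [← one_div, lt_div_iff₀ hC0]
    nlinarith [c.2]
  have hinj : InjOn f (closedBall x r) := hf.injOn <| f'.subsingleton_or_nnnorm_symm_pos.imp id
    fun hN => by
      rw [← NNReal.coe_lt_coe, NNReal.coe_inv, coe_nnnorm]
      exact hcC.trans_le (inv_anti₀ hN hC)
  -- Solving on the half ball puts the solution strictly inside the ball of radius `r`.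
  have hsurj := hf.surjOn_closedBall_of_nonlinearRightInverse
    (f'.nonlinearRightInverseOfNormSymmLE hC) (ε := r / 2) (by positivity)
    (closedBall_subset_closedBall (by linarith))
  have hradius : r / (4 * C) ≤ (C⁻¹ - c) * (r / 2) := by
    field_simp
    nlinarith
  obtain ⟨z, hz, rfl⟩ := hsurj <| closedBall_subset_closedBall
    (by simpa [ContinuousLinearEquiv.nonlinearRightInverseOfNormSymmLE, hC0.le] using hradius) hp.le
  refine ⟨z, ⟨(mem_closedBall.1 hz).trans_lt (by linarith), rfl⟩, fun w hw => ?_⟩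
  exact hinj (mem_closedBall.2 hw.1.le) (closedBall_subset_closedBall (by linarith) hz) hw.2

end

theorem existsUnique_norm_lt_map_add_adjoint_eq {E F : Type*} [NormedAddCommGroup E]
    [InnerProductSpace ℝ E] [CompleteSpace E] [NormedAddCommGroup F] [InnerProductSpace ℝ F]
    [CompleteSpace F] {h : E → F} {y : E} (hy : h y = 0)
    (hunit : IsUnit (fderiv ℝ h y ∘L adjoint (fderiv ℝ h y))) {C M ρ r : ℝ} (hC0 : 0 < C)
    (hC : ‖Ring.inverse (fderiv ℝ h y ∘L adjoint (fderiv ℝ h y))‖ ≤ C) (hM0 : 0 < M)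
    (hM : ‖fderiv ℝ h y‖ ≤ M) (hr : 0 < r) (hMr : M * r < ρ)
    (hdiff : ∀ z ∈ ball y ρ, DifferentiableAt ℝ h z)
    (hρ : ∀ z ∈ ball y ρ, dist (fderiv ℝ h z) (fderiv ℝ h y) < (2 * C * M)⁻¹)
    {p : F} (hp : ‖p‖ < r / (4 * C)) :
    ∃! L, ‖L‖ < r ∧ h (y + adjoint (fderiv ℝ h y) L) = p := by
  obtain ⟨u, hu⟩ := hunit
  set e := ContinuousLinearEquiv.unitsEquiv ℝ F u
  have he : (e : F →L[ℝ] F) = fderiv ℝ h y ∘L adjoint (fderiv ℝ h y) := hu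
  have hinv : ‖(e.symm : F →L[ℝ] F)‖ ≤ C := by rwa [← hu, Ring.inverse_unit] at hC
  have hA : ‖adjoint (fderiv ℝ h y)‖ ≤ M := by rwa [LinearIsometryEquiv.norm_map]
  let c : ℝ≥0 := ⟨(2 * C)⁻¹, by positivity⟩
  have hc_eq : (c : ℝ) = (2 * C)⁻¹ := rfl
  have hc : 2 * (c : ℝ) * C ≤ 1 := (by rw [hc_eq]; field_simp : 2 * (c : ℝ) * C = 1).le
  have happrox : ApproximatesLinearOn (fun L => h (y + adjoint (fderiv ℝ h y) L)) (e : F →L[ℝ] F)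
      (closedBall 0 r) c := by
    rw [he]
    refine approximatesLinearOn_comp_const_add
      ((mul_le_mul_of_nonneg_right hA hr.le).trans_lt hMr) hdiff fun z hz => ?_
    calc ‖fderiv ℝ h z - fderiv ℝ h y‖ * ‖adjoint (fderiv ℝ h y)‖ ≤ (2 * C * M)⁻¹ * M := by
          gcongr
          rw [← dist_eq_norm]
          exact (hρ z hz).le
      _ = c := by rw [hc_eq]; field_simp
  simpa using happrox.existsUnique_dist_lt hr hC0 hinv hc (p := p) (by simpa [hy] using hp)

theorem recovery_map_general
    {d m : ℕ} (h : EuclideanSpace ℝ (Fin d) → EuclideanSpace ℝ (Fin m))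
    (hsmooth : ContDiff ℝ 2 h)
    (S : Set (EuclideanSpace ℝ (Fin d))) (hS : S = h ⁻¹' {0})
    (hcomp : IsCompact S)
    (hrank : ∀ y ∈ S, Function.Surjective (fderiv ℝ h y)) :
    ∃ δ > (0 : ℝ), ∃ r > (0 : ℝ),
      (∀ y ∈ S, ∀ p : EuclideanSpace ℝ (Fin m), ‖p‖ < δ →
        ∃! L : EuclideanSpace ℝ (Fin m), ‖L‖ < r ∧
          h (y + ContinuousLinearMap.adjoint (fderiv ℝ h y) L) = p) ∧
      (∀ y ∈ S, ∀ L : EuclideanSpace ℝ (Fin m), ‖L‖ < r →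
        h (y + ContinuousLinearMap.adjoint (fderiv ℝ h y) L) = 0 → L = 0) := by
  have hzero : ∀ y ∈ S, h y = 0 := fun y hy => by simpa [hS] using hy
  have hdiff : Differentiable ℝ h := hsmooth.differentiable (by norm_num)
  have hDh : Continuous (fderiv ℝ h) := hsmooth.continuous_fderiv (by norm_num)
  have hunit : ∀ y ∈ S, IsUnit (fderiv ℝ h y ∘L adjoint (fderiv ℝ h y)) := fun y hy =>
    isUnit_comp_adjoint_of_surjective (hrank y hy)
  obtain ⟨C, hC0, hC⟩ := hcomp.exists_pos_bound_of_continuousOn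
    ((hDh.clm_comp (adjoint.continuous.comp hDh)).continuousOn.ringInverse hunit)
  obtain ⟨M, hM0, hM⟩ := hcomp.exists_pos_bound_of_continuousOn hDh.continuousOn
  obtain ⟨ρ, hρ0, hρ⟩ := hcomp.exists_pos_forall_dist_lt_of_continuousAt
    (fun y _ => hDh.continuousAt) (ε := (2 * C * M)⁻¹) (by positivity)
  have hr : 0 < ρ / (2 * M) := by positivity
  have key : ∀ y ∈ S, ∀ p, ‖p‖ < ρ / (2 * M) / (4 * C) →
      ∃! L, ‖L‖ < ρ / (2 * M) ∧ h (y + adjoint (fderiv ℝ h y) L) = p := fun y hy _ hp =>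
    existsUnique_norm_lt_map_add_adjoint_eq (hzero y hy) (hunit y hy) hC0 (hC y hy) hM0 (hM y hy)
      hr (by field_simp; linarith) (fun z _ => hdiff z) (hρ y hy) hp
  refine ⟨_, by positivity, _, hr, key, fun y hy L hL hL0 => ?_⟩
  exact (key y hy 0 (by simpa using by positivity)).unique ⟨hL, hL0⟩
    ⟨by simpa using hr, by simpa using hzero y hy⟩

/-- Recovery map via the implicit function theorem (core of Theorem C.3): there are
`δ, r > 0` such that for every `y ∈ Σ = h⁻¹(0)` and every `p` with `‖p‖ < δ` there is a
unique `L` with `‖L‖ < r` and `h(y + Dh(y)ᵀ L) = p`; for `p = 0` this unique `L` is `0`. -/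
theorem recovery_map
    {d m : ℕ} (h : EuclideanSpace ℝ (Fin d) → EuclideanSpace ℝ (Fin m))
    (hsmooth : ContDiff ℝ 2 h)
    (S : Set (EuclideanSpace ℝ (Fin d))) (hS : S = h ⁻¹' {0})
    (hne : S.Nonempty) (hcomp : IsCompact S)
    (hrank : ∀ y ∈ S, Function.Surjective (fderiv ℝ h y)) :
    ∃ δ > (0 : ℝ), ∃ r > (0 : ℝ),
      (∀ y ∈ S, ∀ p : EuclideanSpace ℝ (Fin m), ‖p‖ < δ →
        ∃! L : EuclideanSpace ℝ (Fin m), ‖L‖ < r ∧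
          h (y + ContinuousLinearMap.adjoint (fderiv ℝ h y) L) = p) ∧
      (∀ y ∈ S, ∀ L : EuclideanSpace ℝ (Fin m), ‖L‖ < r →
        h (y + ContinuousLinearMap.adjoint (fderiv ℝ h y) L) = 0 → L = 0) :=
  recovery_map_general h hsmooth S hS hcomp hrank
end

section
/- Let N : ℝ^d → ℝ^{d×m} be differentiable at a point x₀ with N(x₀)ᵀ N(x₀) = I_m, and set Π(x) := I_d − N(x) N(x)ᵀ. For k ∈ {1,…,d} define the vector field f_k(x) := Π(x) e_k, where e_k is the k-th standard basis vector, and define its Π-divergence at x₀ by (div_Π f_k)(x₀) := tr(Π(x₀) · Df_k(x₀)), where Df_k(x₀) is the Jacobian matrix of f_k at x₀. Then Σ_{k=1}^d (div_Π f_k)(x₀) · f_k(x₀) = 0 in ℝ^d. -/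
/-!
Differentiating `Π = 1 - N Nᵀ` in direction `v` gives `-(Ṅ Nᵀ + N Ṅᵀ)` with `Ṅ` the entrywise
derivative. Since `Π(x₀)` is symmetric and annihilates `N(x₀)`, contracting with `Π(x₀)` kills the
`N Ṅᵀ` term, so the vector of divergences `(div_Π f_k)_k` lies in the column span of `N(x₀)`.
The sum in question is `Π(x₀)` applied to that vector, hence zero.
-/

open Matrix

namespace Matrix

variable {l n m R : Type*} [Fintype n] [Fintype m]

theorem sum_smul_col_eq_mulVec [CommSemiring R] (M : Matrix l n R) (v : n → R) :
    ∑ k, v k • M.col k = M *ᵥ v := by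
  ext i
  simp [mulVec, dotProduct, mul_comm]

theorem one_sub_mul_transpose_mul_eq_zero [DecidableEq n] [DecidableEq m] [CommRing R]
    {A : Matrix n m R} (h : Aᵀ * A = 1) : (1 - A * Aᵀ) * A = 0 := by
  rw [Matrix.sub_mul, Matrix.one_mul, Matrix.mul_assoc, h, Matrix.mul_one, sub_self]

omit [Fintype n] in
theorem transpose_one_sub_mul_transpose [DecidableEq n] [CommRing R] (A : Matrix n m R) :
    (1 - A * Aᵀ)ᵀ = 1 - A * Aᵀ := by
  rw [transpose_sub, transpose_one, transpose_mul, transpose_transpose]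

theorem sum_sum_mul_mul_transpose_add_eq_mulVec [CommRing R] {A : Matrix n m R}
    {P : Matrix n n R} (hP : Pᵀ * A = 0) (D : n → Matrix n m R) :
    (fun k => ∑ i, ∑ j, P i j * (D j * Aᵀ + A * (D j)ᵀ) i k) = A *ᵥ ∑ j, (Pᵀ * D j) j := by
  have hcontract (M : Matrix n n R) (j k : n) : ∑ i, P i j * M i k = (Pᵀ * M) j k := by
    simp [mul_apply]
  ext k
  rw [Finset.sum_comm]
  simp_rw [hcontract, Matrix.mul_add, ← Matrix.mul_assoc, hP, Matrix.zero_mul, add_zero,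
    mul_apply_eq_vecMul, vecMul_transpose, mulVec_sum, Finset.sum_apply]

end Matrix

section EntrywiseFDeriv

variable {𝕜 E n m : Type*} [NontriviallyNormedField 𝕜] [NormedAddCommGroup E] [NormedSpace 𝕜 E]
  [Fintype m]

noncomputable def Matrix.entrywiseFDeriv (N : E → Matrix n m 𝕜) (x₀ v : E) : Matrix n m 𝕜 :=
  of fun i a => fderiv 𝕜 (fun x => N x i a) x₀ v

theorem fderiv_one_sub_mul_transpose_apply [DecidableEq n] {N : E → Matrix n m 𝕜} {x₀ : E}
    (hN : ∀ i a, DifferentiableAt 𝕜 (fun x => N x i a) x₀) (i k : n) (v : E) :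
    fderiv 𝕜 (fun x => (1 - N x * (N x)ᵀ : Matrix n n 𝕜) i k) x₀ v =
      -(entrywiseFDeriv N x₀ v * (N x₀)ᵀ + N x₀ * (entrywiseFDeriv N x₀ v)ᵀ) i k := by
  have hentry : (fun x => (1 - N x * (N x)ᵀ : Matrix n n 𝕜) i k)
      = fun x => (1 : Matrix n n 𝕜) i k - ∑ a, N x i a * N x k a := by
    funext x
    simp [Matrix.sub_apply, mul_apply]
  rw [hentry, fderiv_const_sub,
    fderiv_fun_sum (A := fun a x => N x i a * N x k a) fun a _ => (hN i a).mul (hN k a)]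
  simp [fderiv_fun_mul (hN _ _) (hN _ _), entrywiseFDeriv, mul_apply, Finset.sum_add_distrib,
    mul_comm, add_comm]

end EntrywiseFDeriv

/-- Lemma F.2: for `Π(x) = I - N(x)N(x)ᵀ` with `N(x₀)ᵀN(x₀) = I`, the tangential fields
`f_k(x) = Π(x) e_k` satisfy `∑_k (div_Π f_k)(x₀) · f_k(x₀) = 0`, where
`(div_Π f_k)(x₀) = tr(Π(x₀) · Df_k(x₀)) = ∑_{i,j} Π_{ij}(x₀) ∂_j (f_k)_i (x₀)`. -/
theorem tangential_divergence_field_vanishes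
    {d m : ℕ} (N : (Fin d → ℝ) → Matrix (Fin d) (Fin m) ℝ)
    (x₀ : Fin d → ℝ)
    (hdiff : ∀ i j, DifferentiableAt ℝ (fun x => N x i j) x₀)
    (horth : (N x₀)ᵀ * N x₀ = 1) :
    ∑ k : Fin d,
      (∑ i, ∑ j, ((1 : Matrix (Fin d) (Fin d) ℝ) - N x₀ * (N x₀)ᵀ) i j *
        fderiv ℝ (fun x =>
          ((1 : Matrix (Fin d) (Fin d) ℝ) - N x * (N x)ᵀ).mulVec (Pi.single k 1) i)
          x₀ (Pi.single j 1)) •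
      ((1 : Matrix (Fin d) (Fin d) ℝ) - N x₀ * (N x₀)ᵀ).mulVec (Pi.single k 1) = 0 := by
  have hPN := one_sub_mul_transpose_mul_eq_zero horth
  have hPTN : (1 - N x₀ * (N x₀)ᵀ)ᵀ * N x₀ = 0 := by
    rwa [transpose_one_sub_mul_transpose]
  simp_rw [mulVec_single_one, col_apply]
  simp only [fderiv_one_sub_mul_transpose_apply hdiff, mul_neg, Finset.sum_neg_distrib,
    neg_smul, sum_smul_col_eq_mulVec]
  rw [sum_sum_mul_mul_transpose_add_eq_mulVec hPTN, mulVec_mulVec, hPN, zero_mulVec, neg_zero]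
end
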